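/- Let a : ℤ×ℤ → ℂ be bounded (|a_{j,k}| ≤ M for all (j,k)), and let b, g : ℤ×ℤ → ℂ decay super-algebraically: for every natural number q there exist constants C_q, D_q such that |b_{j,k}| ≤ C_q (1+max(|j|,|k|))^{-q} and |g_{j,k}| ≤ D_q (1+max(|j|,|k|))^{-q} for all (j,k). For a positive integer F define f̃^F_{m,n} := Σ_{|j|≤F, |k|≤F} a_{j,k} b_{m−j,n−k} for all (m,n) ∈ ℤ², and f^{t,F}_{m,n} := Σ_{|j|≤F, |k|≤F, |m−j|≤F, |n−k|≤F} a_{j,k} b_{m−j,n−k}. Then for every natural number p there exists a constant C > 0 such that for all positive integers F, | Σ_{(m,n)∈ℤ²} f̃^F_{m,n} g_{m,n} − Σ_{|m|≤F, |n|≤F} f^{t,F}_{m,n} g_{m,n} | ≤ C · F^{-p}. -/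

import Mathlib

/-!
Split the exact pairing over the box `B = [-F, F]²` and its complement. Off `B`, the truncated
convolution is bounded by `M ∑ ‖b‖`, so that part is controlled by the `ℓ¹`-tail of `g` outside
`B`. On `B`, the truncated and the doubly truncated convolutions differ only by the terms with
`x - j ∉ B`, which contribute at most `M` times the `ℓ¹`-tail of `b`. Both tails are `O(F^{-p})`:
outside `B` we have `‖x‖ ≥ F` for the sup norm, so a bound `C (1 + ‖x‖)^{-(p+4)}` is at most
`C F^{-p} (1 + ‖x‖)^{-4}`, and `(1 + ‖x‖)^{-4}` is summable on `ℤ²`.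
-/

open Finset

lemma summable_inv_one_add_norm_int_sq : Summable fun n : ℤ => ((1 + ‖n‖) ^ 2)⁻¹ := by
  refine Summable.of_norm_bounded_eventually (Real.summable_one_div_int_pow.mpr one_lt_two) ?_
  filter_upwards [(Set.finite_singleton (0 : ℤ)).compl_mem_cofinite] with n hn
  have hn : (0 : ℝ) < |(n : ℝ)| := by simpa using hn
  rw [norm_inv, norm_pow, Real.norm_of_nonneg (by positivity), Int.norm_eq_abs, one_div,
    ← sq_abs (n : ℝ)]
  gcongr
  linarith

lemma Summable.inv_one_add_norm_prod_pow {E F : Type*} [SeminormedAddCommGroup E]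
    [SeminormedAddCommGroup F] {r s : ℕ} (hE : Summable fun x : E => ((1 + ‖x‖) ^ r)⁻¹)
    (hF : Summable fun y : F => ((1 + ‖y‖) ^ s)⁻¹) :
    Summable fun z : E × F => ((1 + ‖z‖) ^ (r + s))⁻¹ := by
  refine (hE.mul_of_nonneg hF (fun _ => by positivity) fun _ => by positivity).of_nonneg_of_le
    (fun _ => by positivity) fun z => ?_
  rw [← mul_inv, pow_add]
  gcongr
  exacts [norm_fst_le z, norm_snd_le z]

section Decay

variable {G E : Type*} [SeminormedAddGroup G] [SeminormedAddGroup E]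

lemma summable_norm_of_norm_le_div_one_add_norm_pow {h : G → E} {C : ℝ} {r : ℕ}
    (hw : Summable fun x : G => ((1 + ‖x‖) ^ r)⁻¹) (hh : ∀ x, ‖h x‖ ≤ C / (1 + ‖x‖) ^ r) :
    Summable fun x => ‖h x‖ :=
  (hw.mul_left C).of_nonneg_of_le (fun _ => norm_nonneg _) fun x => hh x

lemma tsum_norm_subtype_le_div_pow {h : G → E} {C F : ℝ} {p r : ℕ}
    (hw : Summable fun x : G => ((1 + ‖x‖) ^ r)⁻¹) (hh : ∀ x, ‖h x‖ ≤ C / (1 + ‖x‖) ^ (p + r))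
    (hF : 0 < F) {S : Set G} (hS : ∀ x ∈ S, F ≤ ‖x‖) :
    ∑' x : S, ‖h x‖ ≤ C * (∑' x : G, ((1 + ‖x‖) ^ r)⁻¹) / F ^ p := by
  have hC : 0 ≤ C := by simpa using (norm_nonneg _).trans (hh (0 : G))
  have hpt : ∀ x : S, ‖h x‖ ≤ C / F ^ p * ((1 + ‖(x : G)‖) ^ r)⁻¹ := fun x => by
    have hFx : F ^ p ≤ (1 + ‖(x : G)‖) ^ p := by
      gcongr
      linarith [hS x x.2]
    calc ‖h x‖ ≤ C / (1 + ‖(x : G)‖) ^ (p + r) := hh x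
      _ ≤ C / (F ^ p * (1 + ‖(x : G)‖) ^ r) := by rw [pow_add]; gcongr
      _ = C / F ^ p * ((1 + ‖(x : G)‖) ^ r)⁻¹ := by rw [div_mul_eq_div_div, div_eq_mul_inv]
  have hsum : Summable fun x => ‖h x‖ :=
    summable_norm_of_norm_le_div_one_add_norm_pow (C := C) hw fun x =>
      (hh x).trans (by gcongr; exacts [le_add_of_nonneg_right (norm_nonneg x), r.le_add_left p])
  calc ∑' x : S, ‖h x‖ ≤ ∑' x : S, C / F ^ p * ((1 + ‖(x : G)‖) ^ r)⁻¹ :=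
        Summable.tsum_le_tsum hpt (hsum.subtype S) ((hw.mul_left _).subtype S)
    _ = C / F ^ p * ∑' x : S, ((1 + ‖(x : G)‖) ^ r)⁻¹ := tsum_mul_left
    _ ≤ C / F ^ p * ∑' x : G, ((1 + ‖x‖) ^ r)⁻¹ := by
        gcongr
        exact Summable.tsum_subtype_le _ S (fun _ => by positivity) hw
    _ = C * (∑' x : G, ((1 + ‖x‖) ^ r)⁻¹) / F ^ p := by ring

end Decay

section TruncatedConvolution

variable {G R : Type*} [AddCommGroup G] [DecidableEq G] [NormedRing R]

lemma sum_comp_sub_le_tsum_subtype {f : G → ℝ} (hf0 : 0 ≤ f) (hf : Summable f) {x : G}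
    {s : Finset G} {S : Set G} (hs : ∀ j ∈ s, x - j ∈ S) :
    ∑ j ∈ s, f (x - j) ≤ ∑' y : S, f y := by
  calc ∑ j ∈ s, f (x - j) = ∑ j ∈ s, S.indicator f (x - j) :=
        sum_congr rfl fun j hj => (Set.indicator_of_mem (hs j hj) f).symm
    _ = ∑ y ∈ s.image (x - ·), S.indicator f y :=
        (sum_image fun _ _ _ _ h => sub_right_injective h).symm
    _ ≤ ∑' y, S.indicator f y :=
        (hf.indicator S).sum_le_tsum _ fun _ _ => Set.indicator_nonneg (fun y _ => hf0 y) _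
    _ = ∑' y : S, f y := (tsum_subtype S f).symm

lemma norm_sum_mul_comp_sub_le {a b : G → R} {M : ℝ} (ha : ∀ j, ‖a j‖ ≤ M)
    (hb : Summable fun y => ‖b y‖) {x : G} {s : Finset G} {S : Set G}
    (hs : ∀ j ∈ s, x - j ∈ S) :
    ‖∑ j ∈ s, a j * b (x - j)‖ ≤ M * ∑' y : S, ‖b y‖ := by
  have hM : 0 ≤ M := (norm_nonneg _).trans (ha 0)
  calc ‖∑ j ∈ s, a j * b (x - j)‖ ≤ ∑ j ∈ s, ‖a j‖ * ‖b (x - j)‖ :=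
        (norm_sum_le _ _).trans (sum_le_sum fun j _ => norm_mul_le _ _)
    _ ≤ ∑ j ∈ s, M * ‖b (x - j)‖ :=
        sum_le_sum fun j _ => mul_le_mul_of_nonneg_right (ha j) (norm_nonneg _)
    _ = M * ∑ j ∈ s, ‖b (x - j)‖ := (mul_sum _ _ _).symm
    _ ≤ M * ∑' y : S, ‖b y‖ :=
        mul_le_mul_of_nonneg_left
          (sum_comp_sub_le_tsum_subtype (fun _ => norm_nonneg _) hb hs) hM

variable [CompleteSpace R]

theorem norm_tsum_sub_sum_doublyTruncated_le {B : Finset G} {a b g : G → R} {M : ℝ}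
    (ha : ∀ j, ‖a j‖ ≤ M) (hb : Summable fun y => ‖b y‖) (hg : Summable fun x => ‖g x‖) :
    ‖(∑' x, (∑ j ∈ B, a j * b (x - j)) * g x) -
        ∑ x ∈ B, (∑ j ∈ B with x - j ∈ B, a j * b (x - j)) * g x‖ ≤
      M * ((∑' y, ‖b y‖) * (∑' x : ↥(↑B : Set G)ᶜ, ‖g x‖) +
        (∑' y : ↥(↑B : Set G)ᶜ, ‖b y‖) * ∑' x, ‖g x‖) := by
  have hM : 0 ≤ M := (norm_nonneg _).trans (ha 0)
  set conv := fun x => ∑ j ∈ B, a j * b (x - j)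
  have hconv : ∀ x, ‖conv x‖ ≤ M * ∑' y, ‖b y‖ := fun x => by
    rw [← tsum_univ]
    exact norm_sum_mul_comp_sub_le ha hb fun _ _ => Set.mem_univ _
  have hconv_mul : ∀ x, ‖conv x * g x‖ ≤ M * (∑' y, ‖b y‖) * ‖g x‖ := fun x =>
    (norm_mul_le _ _).trans (mul_le_mul_of_nonneg_right (hconv x) (norm_nonneg _))
  have hsum : Summable fun x => ‖conv x * g x‖ :=
    (hg.mul_left _).of_nonneg_of_le (fun _ => norm_nonneg _) hconv_mul
  have hbox : ∑ x ∈ B, conv x * g x =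
      ∑ x ∈ B, (∑ j ∈ B with x - j ∈ B, a j * b (x - j)) * g x +
        ∑ x ∈ B, (∑ j ∈ B with x - j ∉ B, a j * b (x - j)) * g x := by
    rw [← sum_add_distrib]
    exact sum_congr rfl fun x _ => by rw [← add_mul, sum_filter_add_sum_filter_not]
  have hsplit : (∑' x, conv x * g x) - ∑ x ∈ B, (∑ j ∈ B with x - j ∈ B, a j * b (x - j)) * g x =
      (∑' x : ↥(↑B : Set G)ᶜ, conv x * g x) +
        ∑ x ∈ B, (∑ j ∈ B with x - j ∉ B, a j * b (x - j)) * g x := by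
    rw [← hsum.of_norm.sum_add_tsum_compl (s := B), hbox]
    abel
  rw [hsplit, mul_add]
  refine (norm_add_le _ _).trans (add_le_add ?_ ?_)
  · calc ‖∑' x : ↥(↑B : Set G)ᶜ, conv x * g x‖ ≤ ∑' x : ↥(↑B : Set G)ᶜ, ‖conv x * g x‖ :=
          norm_tsum_le_tsum_norm (hsum.subtype _)
      _ ≤ ∑' x : ↥(↑B : Set G)ᶜ, M * (∑' y, ‖b y‖) * ‖g x‖ :=
          (hsum.subtype _).tsum_le_tsum (fun x => hconv_mul x) ((hg.mul_left _).subtype _)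
      _ = M * ((∑' y, ‖b y‖) * ∑' x : ↥(↑B : Set G)ᶜ, ‖g x‖) := by
          rw [tsum_mul_left, mul_assoc]
  · calc ‖∑ x ∈ B, (∑ j ∈ B with x - j ∉ B, a j * b (x - j)) * g x‖
          ≤ ∑ x ∈ B, ‖∑ j ∈ B with x - j ∉ B, a j * b (x - j)‖ * ‖g x‖ :=
          (norm_sum_le _ _).trans (sum_le_sum fun x _ => norm_mul_le _ _)
      _ ≤ ∑ x ∈ B, M * (∑' y : ↥(↑B : Set G)ᶜ, ‖b y‖) * ‖g x‖ :=
          sum_le_sum fun x _ => mul_le_mul_of_nonneg_right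
            (norm_sum_mul_comp_sub_le ha hb fun j hj => (mem_filter.mp hj).2) (norm_nonneg _)
      _ = M * (∑' y : ↥(↑B : Set G)ᶜ, ‖b y‖) * ∑ x ∈ B, ‖g x‖ := (mul_sum _ _ _).symm
      _ ≤ M * (∑' y : ↥(↑B : Set G)ᶜ, ‖b y‖) * ∑' x, ‖g x‖ :=
          mul_le_mul_of_nonneg_left (hg.sum_le_tsum _ fun _ _ => norm_nonneg _)
            (mul_nonneg hM (tsum_nonneg fun _ => norm_nonneg _))
      _ = M * ((∑' y : ↥(↑B : Set G)ᶜ, ‖b y‖) * ∑' x, ‖g x‖) := mul_assoc _ _ _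

end TruncatedConvolution

lemma norm_int_prod (x : ℤ × ℤ) : ‖x‖ = ((max |x.1| |x.2| : ℤ) : ℝ) := by
  rw [Prod.norm_def, Int.norm_eq_abs, Int.norm_eq_abs, Int.cast_max, Int.cast_abs, Int.cast_abs]

lemma mem_Icc_neg_prod_iff {x : ℤ × ℤ} {F : ℤ} :
    x ∈ Icc (-F) F ×ˢ Icc (-F) F ↔ |x.1| ≤ F ∧ |x.2| ≤ F := by
  simp only [mem_product, mem_Icc, abs_le]

lemma le_norm_of_notMem_Icc_neg_prod {x : ℤ × ℤ} {F : ℤ} (hx : x ∉ Icc (-F) F ×ˢ Icc (-F) F) :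
    (F : ℝ) ≤ ‖x‖ := by
  rw [mem_Icc_neg_prod_iff] at hx
  rw [norm_int_prod, Int.cast_le]
  omega

/-- Super-algebraic convergence of the FFT-based quadrature: with `a` bounded and
`b`, `g` decaying faster than any polynomial rate, the difference between the exact
pairing `∑_{(m,n)∈ℤ²} f̃^F_{m,n} g_{m,n}` (with
`f̃^F_{m,n} = ∑_{|j|≤F,|k|≤F} a_{j,k} b_{m−j,n−k}`) and the doubly truncated quadrature
`∑_{|m|,|n|≤F} f^{t,F}_{m,n} g_{m,n}` (with
`f^{t,F}_{m,n} = ∑_{|j|,|k|,|m−j|,|n−k|≤F} a_{j,k} b_{m−j,n−k}`) is `O(F^{-p})` for every `p`. -/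
theorem stmt9 (M : ℝ) (a b g : ℤ × ℤ → ℂ)
    (ha : ∀ jk : ℤ × ℤ, ‖a jk‖ ≤ M)
    (hb : ∀ q : ℕ, ∃ Cq : ℝ, ∀ jk : ℤ × ℤ,
      ‖b jk‖ ≤ Cq / (1 + ((max |jk.1| |jk.2| : ℤ) : ℝ)) ^ q)
    (hg : ∀ q : ℕ, ∃ Dq : ℝ, ∀ jk : ℤ × ℤ,
      ‖g jk‖ ≤ Dq / (1 + ((max |jk.1| |jk.2| : ℤ) : ℝ)) ^ q)
    (p : ℕ) :
    ∃ C > 0, ∀ F : ℕ, 0 < F →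
      ‖(∑' mn : ℤ × ℤ,
            (∑ jk ∈ Finset.Icc (-(F : ℤ)) (F : ℤ) ×ˢ Finset.Icc (-(F : ℤ)) (F : ℤ),
                a jk * b (mn.1 - jk.1, mn.2 - jk.2)) * g mn) -
          ∑ mn ∈ Finset.Icc (-(F : ℤ)) (F : ℤ) ×ˢ Finset.Icc (-(F : ℤ)) (F : ℤ),
            (∑ jk ∈ (Finset.Icc (-(F : ℤ)) (F : ℤ) ×ˢ
                  Finset.Icc (-(F : ℤ)) (F : ℤ)).filter
                  (fun jk => |mn.1 - jk.1| ≤ (F : ℤ) ∧ |mn.2 - jk.2| ≤ (F : ℤ)),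
                a jk * b (mn.1 - jk.1, mn.2 - jk.2)) * g mn‖
        ≤ C / (F : ℝ) ^ p := by
  simp only [← norm_int_prod] at hb hg
  have hw : Summable fun x : ℤ × ℤ => ((1 + ‖x‖) ^ 4)⁻¹ := by
    simpa only [Nat.reduceAdd] using
      summable_inv_one_add_norm_int_sq.inv_one_add_norm_prod_pow summable_inv_one_add_norm_int_sq
  obtain ⟨Cb, hCb⟩ := hb (p + 4)
  obtain ⟨Dg, hDg⟩ := hg (p + 4)
  obtain ⟨_, hb4⟩ := hb 4
  obtain ⟨_, hg4⟩ := hg 4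
  have hbsum := summable_norm_of_norm_le_div_one_add_norm_pow hw hb4
  have hgsum := summable_norm_of_norm_le_div_one_add_norm_pow hw hg4
  have hM : 0 ≤ M := (norm_nonneg _).trans (ha 0)
  set W := ∑' x : ℤ × ℤ, ((1 + ‖x‖) ^ 4)⁻¹
  set K := M * ((∑' y, ‖b y‖) * (Dg * W) + Cb * W * ∑' x, ‖g x‖)
  refine ⟨max K 1, lt_max_of_lt_right one_pos, fun F hF => ?_⟩
  set B := Icc (-(F : ℤ)) F ×ˢ Icc (-(F : ℤ)) F
  have hFpos : (0 : ℝ) < F := by exact_mod_cast hF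
  have hfar : ∀ x ∈ (↑B : Set (ℤ × ℤ))ᶜ, (F : ℝ) ≤ ‖x‖ :=
    fun x hx => by exact_mod_cast le_norm_of_notMem_Icc_neg_prod hx
  have hfilter : ∀ mn : ℤ × ℤ,
      {jk ∈ B | |mn.1 - jk.1| ≤ F ∧ |mn.2 - jk.2| ≤ F} = {jk ∈ B | mn - jk ∈ B} :=
    fun mn => filter_congr fun jk _ => (mem_Icc_neg_prod_iff (x := mn - jk)).symm
  simp_rw [hfilter]
  calc _ ≤ M * ((∑' y, ‖b y‖) * (∑' x : ↥(↑B : Set (ℤ × ℤ))ᶜ, ‖g x‖) +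
          (∑' y : ↥(↑B : Set (ℤ × ℤ))ᶜ, ‖b y‖) * ∑' x, ‖g x‖) :=
        norm_tsum_sub_sum_doublyTruncated_le ha hbsum hgsum
    _ ≤ M * ((∑' y, ‖b y‖) * (Dg * W / F ^ p) + Cb * W / F ^ p * ∑' x, ‖g x‖) := by
        gcongr
        · exact tsum_norm_subtype_le_div_pow hw hDg hFpos hfar
        · exact tsum_norm_subtype_le_div_pow hw hCb hFpos hfar
    _ = K / F ^ p := by ring
    _ ≤ max K 1 / F ^ p := by gcongr; exact le_max_left _ _
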